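/- Let K be a complex Hilbert space, P and Q orthogonal projections on K, and θ ∈ ℝ with cos θ ≠ 0. Then the map (ξ₊, ξ₋) ↦ ξ₋ is a linear bijection from the subspace ker P(θ,P) ∩ (ran P × ran Q) of K ⊕ K onto ran P ∩ ran Q, with inverse ξ₋ ↦ (tanθ·ξ₋, ξ₋). In particular the dimension of ker P(θ,P) ∩ (ran P × ran Q) is independent of θ as long as cos θ ≠ 0. -/

import Mathlib

noncomputable section

open ContinuousLinearMap

variable {K : Type*} [NormedAddCommGroup K] [InnerProductSpace ℂ K]

/-- The Hilbert direct sum `K ⊕ K`, identified with `K × K` as a set. -/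
def prodE (K : Type*) [NormedAddCommGroup K] [InnerProductSpace ℂ K] :
    WithLp 2 (K × K) ≃L[ℂ] K × K :=
  WithLp.prodContinuousLinearEquiv 2 ℂ K K

/-- Transport an operator on `K × K` to the Hilbert direct sum `K ⊕ K`. -/
def toSum {K : Type*} [NormedAddCommGroup K] [InnerProductSpace ℂ K]
    (f : K × K →L[ℂ] K × K) : WithLp 2 (K × K) →L[ℂ] WithLp 2 (K × K) :=
  ((prodE K).symm : K × K →L[ℂ] WithLp 2 (K × K)) ∘L f ∘L
    ((prodE K) : WithLp 2 (K × K) →L[ℂ] K × K)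

/-- The operator on `K ⊕ K` with block matrix `[[A, B],[C, D]]`. -/
def blockOp {K : Type*} [NormedAddCommGroup K] [InnerProductSpace ℂ K]
    (A B C D : K →L[ℂ] K) : WithLp 2 (K × K) →L[ℂ] WithLp 2 (K × K) :=
  toSum ((A.coprod B).prod (C.coprod D))

/-- The family `P(θ,P)` on `K ⊕ K`, with block matrix
`[[cos²θ·P + sin²θ·(I-P), -cosθ·sinθ·I],[-cosθ·sinθ·I, cos²θ·(I-P) + sin²θ·P]]`. -/
def Ptheta {K : Type*} [NormedAddCommGroup K] [InnerProductSpace ℂ K]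
    (θ : ℝ) (P : K →L[ℂ] K) : WithLp 2 (K × K) →L[ℂ] WithLp 2 (K × K) :=
  blockOp
    (((Real.cos θ : ℂ) ^ 2) • P + ((Real.sin θ : ℂ) ^ 2) • (1 - P))
    (-(((Real.cos θ : ℂ) * (Real.sin θ : ℂ)) • (1 : K →L[ℂ] K)))
    (-(((Real.cos θ : ℂ) * (Real.sin θ : ℂ)) • (1 : K →L[ℂ] K)))
    (((Real.cos θ : ℂ) ^ 2) • (1 - P) + ((Real.sin θ : ℂ) ^ 2) • P)

/-- The subspace `ker P(θ,P) ∩ (ran P × ran Q)` of `K ⊕ K`. -/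
def kerCap {K : Type*} [NormedAddCommGroup K] [InnerProductSpace ℂ K]
    (θ : ℝ) (P Q : K →L[ℂ] K) : Submodule ℂ (WithLp 2 (K × K)) :=
  LinearMap.ker (Ptheta θ P : WithLp 2 (K × K) →ₗ[ℂ] WithLp 2 (K × K)) ⊓
    Submodule.comap (((prodE K) : WithLp 2 (K × K) →L[ℂ] K × K) : WithLp 2 (K × K) →ₗ[ℂ] K × K)
      ((LinearMap.range (P : K →ₗ[ℂ] K)).prod (LinearMap.range (Q : K →ₗ[ℂ] K)))

/-!
For `ξ₊ ∈ ran P` the first block row of `P(θ,P)` reduces to `cos θ (cos θ ξ₊ - sin θ ξ₋)`, so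
`ξ₊ = tan θ ξ₋`. Then `ξ₋ ∈ ran P` as well: if `sin θ ≠ 0`, because `ξ₋` is a multiple of `ξ₊`;
if `sin θ = 0`, because the second row becomes `cos² θ (I - P) ξ₋`. Conversely both rows annihilate
`(tan θ ξ, ξ)` for `ξ ∈ ran P`. So `ker P(θ,P) ∩ (ran P × ran Q)` is the graph of `ξ ↦ tan θ ξ`
over `ran P ∩ ran Q`.
-/

lemma kernel_equations_iff_of_apply_eq_self {𝕜 M : Type*} [Field 𝕜] [AddCommGroup M] [Module 𝕜 M]
    (P : M →ₗ[𝕜] M) {c s : 𝕜} (hc : c ≠ 0) {a b : M} (ha : P a = a) :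
    (c ^ 2 • P a + s ^ 2 • (a - P a) - (c * s) • b = 0 ∧
        c ^ 2 • (b - P b) + s ^ 2 • P b - (c * s) • a = 0) ↔
      P b = b ∧ a = (s / c) • b := by
  have first_row : c ^ 2 • a = (c * s) • b ↔ a = (s / c) • b := by
    rw [show (c * s) • b = c ^ 2 • (s / c) • b by rw [smul_smul]; congr 1; field_simp]
    exact smul_right_inj (pow_ne_zero 2 hc)
  rw [ha, sub_self, smul_zero, add_zero, sub_eq_zero, sub_eq_zero, first_row]
  constructor
  · rintro ⟨ha', hb⟩
    refine ⟨?_, ha'⟩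
    by_cases hs : s = 0
    · simp only [hs, zero_pow two_ne_zero, zero_smul, add_zero, mul_zero, smul_eq_zero,
        pow_eq_zero_iff two_ne_zero, hc, false_or, sub_eq_zero] at hb
      exact hb.symm
    · rw [ha', map_smul] at ha
      exact smul_right_injective M (div_ne_zero hs hc) ha
  · rintro ⟨hb, rfl⟩
    refine ⟨rfl, ?_⟩
    rw [hb, sub_self, smul_zero, zero_add, smul_smul, show c * s * (s / c) = s ^ 2 by field_simp]

lemma prodE_Ptheta_apply (θ : ℝ) (P : K →L[ℂ] K) (x : WithLp 2 (K × K)) :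
    prodE K (Ptheta θ P x) =
      (((Real.cos θ : ℂ) ^ 2) • P (prodE K x).1
          + ((Real.sin θ : ℂ) ^ 2) • ((prodE K x).1 - P (prodE K x).1)
          - ((Real.cos θ : ℂ) * (Real.sin θ : ℂ)) • (prodE K x).2,
        ((Real.cos θ : ℂ) ^ 2) • ((prodE K x).2 - P (prodE K x).2)
          + ((Real.sin θ : ℂ) ^ 2) • P (prodE K x).2
          - ((Real.cos θ : ℂ) * (Real.sin θ : ℂ)) • (prodE K x).1) := by
  simp only [Ptheta, blockOp, toSum, comp_apply, ContinuousLinearEquiv.coe_coe,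
    ContinuousLinearEquiv.apply_symm_apply, prod_apply, coprod_apply, add_apply, smul_apply,
    sub_apply, neg_apply, one_apply_eq_self]
  congr 1 <;> abel

lemma mem_kerCap_iff {θ : ℝ} (hc : Real.cos θ ≠ 0) {P : K →L[ℂ] K} (hP : IsIdempotentElem P)
    (Q : K →L[ℂ] K) (x : WithLp 2 (K × K)) :
    x ∈ kerCap θ P Q ↔
      (prodE K x).2 ∈ LinearMap.range (P : K →ₗ[ℂ] K) ⊓ LinearMap.range (Q : K →ₗ[ℂ] K) ∧
        (prodE K x).1 = (Real.tan θ : ℂ) • (prodE K x).2 := by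
  have hc' : (Real.cos θ : ℂ) ≠ 0 := Complex.ofReal_ne_zero.mpr hc
  have htan : (Real.tan θ : ℂ) = Real.sin θ / Real.cos θ := by
    push_cast [Real.tan_eq_sin_div_cos]; rfl
  rw [kerCap, Submodule.mem_inf, LinearMap.mem_ker, coe_coe, ← (prodE K).map_eq_zero_iff,
    prodE_Ptheta_apply, Prod.mk_eq_zero, Submodule.mem_comap, Submodule.mem_prod,
    Submodule.mem_inf, htan]
  simp only [ContinuousLinearEquiv.coe_coe, coe_coe,
    LinearMap.IsIdempotentElem.mem_range_iff hP.toLinearMap]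
  constructor
  · rintro ⟨eqns, hPa, hQb⟩
    obtain ⟨hPb, ha⟩ := (kernel_equations_iff_of_apply_eq_self (P : K →ₗ[ℂ] K) hc' hPa).1 eqns
    exact ⟨⟨hPb, hQb⟩, ha⟩
  · rintro ⟨⟨hPb, hQb⟩, ha⟩
    have hPa : P (prodE K x).1 = (prodE K x).1 := by rw [ha, map_smul, hPb]
    exact ⟨(kernel_equations_iff_of_apply_eq_self (P : K →ₗ[ℂ] K) hc' hPa).2 ⟨hPb, ha⟩, hPa, hQb⟩

lemma tan_smul_mem_kerCap {θ : ℝ} (hc : Real.cos θ ≠ 0) {P : K →L[ℂ] K} (hP : IsIdempotentElem P)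
    (Q : K →L[ℂ] K) {ξ : K}
    (hξ : ξ ∈ LinearMap.range (P : K →ₗ[ℂ] K) ⊓ LinearMap.range (Q : K →ₗ[ℂ] K)) :
    (prodE K).symm ((Real.tan θ : ℂ) • ξ, ξ) ∈ kerCap θ P Q := by
  rw [mem_kerCap_iff hc hP, ContinuousLinearEquiv.apply_symm_apply]
  exact ⟨hξ, rfl⟩

lemma eq_of_mem_kerCap {θ : ℝ} (hc : Real.cos θ ≠ 0) {P : K →L[ℂ] K} (hP : IsIdempotentElem P)
    (Q : K →L[ℂ] K) {x : WithLp 2 (K × K)} (hx : x ∈ kerCap θ P Q) :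
    (prodE K).symm ((Real.tan θ : ℂ) • (prodE K x).2, (prodE K x).2) = x := by
  rw [ContinuousLinearEquiv.symm_apply_eq]
  exact Prod.ext ((mem_kerCap_iff hc hP Q x).1 hx).2.symm rfl

def kerCapEquiv {θ : ℝ} (hc : Real.cos θ ≠ 0) {P : K →L[ℂ] K} (hP : IsIdempotentElem P)
    (Q : K →L[ℂ] K) :
    kerCap θ P Q ≃ₗ[ℂ] ↥(LinearMap.range (P : K →ₗ[ℂ] K) ⊓ LinearMap.range (Q : K →ₗ[ℂ] K)) where
  toFun x := ⟨(prodE K x).2, ((mem_kerCap_iff hc hP Q x).1 x.2).1⟩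
  map_add' x y := by ext; simp
  map_smul' c x := by ext; simp
  invFun ξ := ⟨(prodE K).symm ((Real.tan θ : ℂ) • ξ, ξ), tan_smul_mem_kerCap hc hP Q ξ.2⟩
  left_inv x := Subtype.ext (eq_of_mem_kerCap hc hP Q x.2)
  right_inv ξ := by ext; simp

theorem statement9_general (P Q : K →L[ℂ] K) (hPidem : P ∘L P = P) :
    (∀ θ : ℝ, Real.cos θ ≠ 0 →
      Set.BijOn (fun x : WithLp 2 (K × K) => ((prodE K) x).2)
        ((kerCap θ P Q : Submodule ℂ (WithLp 2 (K × K))) : Set (WithLp 2 (K × K)))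
        ((LinearMap.range (P : K →ₗ[ℂ] K) ⊓ LinearMap.range (Q : K →ₗ[ℂ] K) : Submodule ℂ K) : Set K) ∧
      (∀ ξ : K, ξ ∈ LinearMap.range (P : K →ₗ[ℂ] K) ⊓ LinearMap.range (Q : K →ₗ[ℂ] K) →
        (prodE K).symm ((Real.tan θ : ℂ) • ξ, ξ) ∈ kerCap θ P Q ∧
        ((prodE K) ((prodE K).symm ((Real.tan θ : ℂ) • ξ, ξ))).2 = ξ) ∧
      (∀ x ∈ kerCap θ P Q,
        (prodE K).symm ((Real.tan θ : ℂ) • ((prodE K) x).2, ((prodE K) x).2) = x)) ∧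
    (∀ θ₁ θ₂ : ℝ, Real.cos θ₁ ≠ 0 → Real.cos θ₂ ≠ 0 →
      Module.rank ℂ (kerCap θ₁ P Q) = Module.rank ℂ (kerCap θ₂ P Q)) := by
  have hP : IsIdempotentElem P := hPidem
  refine ⟨fun θ hc => ⟨?_, fun ξ hξ => ⟨tan_smul_mem_kerCap hc hP Q hξ, by simp⟩,
    fun x hx => eq_of_mem_kerCap hc hP Q hx⟩,
    fun θ₁ θ₂ hc₁ hc₂ => (kerCapEquiv hc₁ hP Q).rank_eq.trans (kerCapEquiv hc₂ hP Q).rank_eq.symm⟩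
  exact Set.InvOn.bijOn ⟨fun x hx => eq_of_mem_kerCap hc hP Q hx, fun ξ _ => by simp⟩
    (fun x hx => ((mem_kerCap_iff hc hP Q x).1 hx).1)
    (fun ξ hξ => tan_smul_mem_kerCap hc hP Q hξ)

/-- For `cos θ ≠ 0`, the map `(ξ₊, ξ₋) ↦ ξ₋` is a linear bijection
from `ker P(θ,P) ∩ (ran P × ran Q)` onto `ran P ∩ ran Q`, with inverse
`ξ₋ ↦ (tanθ·ξ₋, ξ₋)`; in particular the dimension of `ker P(θ,P) ∩ (ran P × ran Q)`
is independent of `θ` as long as `cos θ ≠ 0`. -/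
theorem statement9 [CompleteSpace K] (P Q : K →L[ℂ] K)
    (hPsa : IsSelfAdjoint P) (hPidem : P ∘L P = P)
    (hQsa : IsSelfAdjoint Q) (hQidem : Q ∘L Q = Q) :
    (∀ θ : ℝ, Real.cos θ ≠ 0 →
      Set.BijOn (fun x : WithLp 2 (K × K) => ((prodE K) x).2)
        ((kerCap θ P Q : Submodule ℂ (WithLp 2 (K × K))) : Set (WithLp 2 (K × K)))
        ((LinearMap.range (P : K →ₗ[ℂ] K) ⊓ LinearMap.range (Q : K →ₗ[ℂ] K) : Submodule ℂ K) : Set K) ∧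
      (∀ ξ : K, ξ ∈ LinearMap.range (P : K →ₗ[ℂ] K) ⊓ LinearMap.range (Q : K →ₗ[ℂ] K) →
        (prodE K).symm ((Real.tan θ : ℂ) • ξ, ξ) ∈ kerCap θ P Q ∧
        ((prodE K) ((prodE K).symm ((Real.tan θ : ℂ) • ξ, ξ))).2 = ξ) ∧
      (∀ x ∈ kerCap θ P Q,
        (prodE K).symm ((Real.tan θ : ℂ) • ((prodE K) x).2, ((prodE K) x).2) = x)) ∧
    (∀ θ₁ θ₂ : ℝ, Real.cos θ₁ ≠ 0 → Real.cos θ₂ ≠ 0 →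
      Module.rank ℂ (kerCap θ₁ P Q) = Module.rank ℂ (kerCap θ₂ P Q)) :=
  statement9_general P Q hPidem
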